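/- arXiv:2007.11492 — 8 statements merged into one kernel-verified Lean document; each statement's English description precedes it below -/
import Mathlib

section
/- For every natural number ν and every natural number i, the following identity holds: ∑_{k=0}^{2ν} (−1)^k · C(2ν+i, k+i) · 2^{−k} · C(2k, k) = π · (2ν+1)_i · (2^{2i} · i!)/(2i)! · ∑_{r=0}^{i} [2^{−r} · C(i, r) · (1/2 + (i−r)/2)_ν] / [(i−r)! · Γ(1/2 + (r−i)/2)² · (1 + (i−r)/2)_ν], where all sums and products are taken over real numbers. -/
/-!
Write `T(n, i)` for the coefficient of `X^(n+i)` in `(1 + X²)^n (1 + X)^(2i)` and `S(n, i)` for the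
left-hand sum with `2ν` replaced by `n`. The identity `(2i)! n! 2^n S(n, i) = i! (n+i)! T(n, i)` is
proved by a double induction: `S` obeys Pascal's rule in `(n, i)`, while `T` obeys
`T(n, i+1) = 2 T(n, i) + T(n+1, i)` and a three-term recurrence in `n`; the base case `i = 0` is
Knuth's old sum, read off from `(2X - (1 + X)²)^n = (-(1 + X²))^n`.
Expanding `(1 + X)^(2i) = ((1 + X²) + 2X)^i` writes `T(n, i)` as a sum of central coefficients of
powers of `1 + X²`: central binomial coefficients in even degree, `0` in odd degree. The right-hand
side is the same sum, via `Γ(1/2 - m) (2m)! = (-4)^m m! √π` and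
`(m+1)_ν C(2(m+ν), m+ν) = 4^ν C(2m, m) (m+1/2)_ν`, and the odd-degree terms vanish on both sides.
-/

open Real Finset

open Polynomial

open scoped Nat

namespace Polynomial

variable {R : Type*} [CommSemiring R]

theorem coeff_one_add_X_sq_pow (n k : ℕ) :
    ((1 + X ^ 2 : R[X]) ^ n).coeff k = if 2 ∣ k then (n.choose (k / 2) : R) else 0 := by
  have : (1 + X ^ 2 : R[X]) ^ n = expand R 2 ((1 + X) ^ n) := by simp
  rw [this, coeff_expand two_pos, coeff_one_add_X_pow]

theorem coeff_one_add_X_sq_pow_two_mul (m : ℕ) :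
    ((1 + X ^ 2 : R[X]) ^ (2 * m)).coeff (2 * m) = m.centralBinom := by
  rw [coeff_one_add_X_sq_pow, if_pos (dvd_mul_right 2 m), Nat.mul_div_cancel_left m two_pos,
    Nat.centralBinom_eq_two_mul_choose]

theorem coeff_one_add_X_sq_pow_two_mul_add_one (m : ℕ) :
    ((1 + X ^ 2 : R[X]) ^ (2 * m + 1)).coeff (2 * m + 1) = 0 := by
  rw [coeff_one_add_X_sq_pow, if_neg (by omega)]

end Polynomial

noncomputable def dawsonCoeff (n i : ℕ) : ℝ :=
  ((1 + X ^ 2 : ℝ[X]) ^ n * (1 + X) ^ (2 * i)).coeff (n + i)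

theorem dawsonCoeff_zero_right (n : ℕ) :
    dawsonCoeff n 0 = ((1 + X ^ 2 : ℝ[X]) ^ n).coeff n := by
  simp [dawsonCoeff]

theorem dawsonCoeff_zero_left (i : ℕ) : dawsonCoeff 0 i = (2 * i).choose i := by
  simp [dawsonCoeff, coeff_one_add_X_pow, two_mul]

theorem dawsonCoeff_succ_right (n i : ℕ) :
    dawsonCoeff n (i + 1) = 2 * dawsonCoeff n i + dawsonCoeff (n + 1) i := by
  have h : (1 + X ^ 2 : ℝ[X]) ^ n * (1 + X) ^ (2 * (i + 1))
      = X * (C 2 * ((1 + X ^ 2) ^ n * (1 + X) ^ (2 * i)))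
        + (1 + X ^ 2) ^ (n + 1) * (1 + X) ^ (2 * i) := by
    rw [C_ofNat]; ring
  rw [dawsonCoeff, h, coeff_add, ← add_assoc, coeff_X_mul, coeff_C_mul, add_right_comm]
  rfl

theorem dawsonCoeff_eq_sum (n i : ℕ) :
    dawsonCoeff n i = ∑ r ∈ range (i + 1),
      (i.choose r : ℝ) * 2 ^ r * ((1 + X ^ 2 : ℝ[X]) ^ (n + i - r)).coeff (n + i - r) := by
  have h : (1 + X ^ 2 : ℝ[X]) ^ n * (1 + X) ^ (2 * i) = ∑ r ∈ range (i + 1),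
      C ((i.choose r : ℝ) * 2 ^ r) * ((1 + X ^ 2) ^ (n + i - r) * X ^ r) := by
    rw [pow_mul, show (1 + X : ℝ[X]) ^ 2 = 2 * X + (1 + X ^ 2) by ring, add_pow (2 * X), mul_sum]
    refine sum_congr rfl fun r hr => ?_
    rw [show n + i - r = n + (i - r) by have := mem_range.1 hr; omega, pow_add, map_mul,
      map_pow, C_ofNat, C_eq_natCast, mul_pow]
    ring
  rw [dawsonCoeff, h, finsetSum_coeff]
  refine sum_congr rfl fun r hr => ?_
  rw [coeff_C_mul, coeff_mul_X_pow', if_pos (by have := mem_range.1 hr; omega)]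

theorem dawsonCoeff_add_two_zero (n : ℕ) :
    ((n : ℝ) + 2) * dawsonCoeff (n + 2) 0 = 4 * ((n : ℝ) + 1) * dawsonCoeff n 0 := by
  simp only [dawsonCoeff_zero_right]
  obtain ⟨m, rfl | rfl⟩ := Nat.even_or_odd' n
  · rw [show 2 * m + 2 = 2 * (m + 1) by ring, coeff_one_add_X_sq_pow_two_mul,
      coeff_one_add_X_sq_pow_two_mul]
    have h : ((m : ℝ) + 1) * (m + 1).centralBinom = 2 * (2 * m + 1) * m.centralBinom := by
      exact_mod_cast Nat.succ_mul_centralBinom_succ m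
    push_cast
    linear_combination 2 * h
  · rw [show 2 * m + 1 + 2 = 2 * (m + 1) + 1 by ring, coeff_one_add_X_sq_pow_two_mul_add_one,
      coeff_one_add_X_sq_pow_two_mul_add_one, mul_zero, mul_zero]

theorem dawsonCoeff_add_two (n j : ℕ) : ((n : ℝ) + 2 + j) * dawsonCoeff (n + 2) j
    = 2 * j * dawsonCoeff (n + 1) j + 4 * ((n : ℝ) + 1) * dawsonCoeff n j := by
  induction j generalizing n with
  | zero => simpa using dawsonCoeff_add_two_zero n
  | succ j ih =>
    have ih' := ih (n + 1)
    push_cast at ih' ⊢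
    rw [dawsonCoeff_succ_right (n + 2), dawsonCoeff_succ_right (n + 1),
      dawsonCoeff_succ_right n]
    linear_combination 2 * ih n + ih'

theorem dawsonCoeff_succ_succ (n i : ℕ) :
    ((n : ℝ) + 2 + i) * dawsonCoeff (n + 1) (i + 1)
      = 2 * ((n : ℝ) + 1) * dawsonCoeff n (i + 1)
        + 2 * (2 * (i : ℝ) + 1) * dawsonCoeff (n + 1) i := by
  rw [dawsonCoeff_succ_right (n + 1), dawsonCoeff_succ_right n]
  linear_combination dawsonCoeff_add_two n i

noncomputable def dawsonSum (n i : ℕ) : ℝ :=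
  ∑ k ∈ range (n + 1), (-1 : ℝ) ^ k * ((n + i).choose (k + i)) * ((2 * k).choose k) / 2 ^ k

theorem dawsonSum_zero_left (i : ℕ) : dawsonSum 0 i = 1 := by
  simp [dawsonSum]

theorem dawsonSum_succ_succ (n i : ℕ) :
    dawsonSum (n + 1) (i + 1) = dawsonSum n (i + 1) + dawsonSum (n + 1) i := by
  have pascal (k : ℕ) : ((n + 1 + (i + 1)).choose (k + (i + 1)) : ℝ)
      = (n + (i + 1)).choose (k + (i + 1)) + (n + 1 + i).choose (k + i) := by
    rw [show n + 1 + (i + 1) = n + 1 + i + 1 by ring, show k + (i + 1) = k + i + 1 by ring,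
      Nat.choose_succ_succ', show n + (i + 1) = n + 1 + i by ring]
    push_cast; ring
  have top : (n + (i + 1)).choose (n + 1 + (i + 1)) = 0 := Nat.choose_eq_zero_of_lt (by omega)
  calc dawsonSum (n + 1) (i + 1)
      = ∑ k ∈ range (n + 1 + 1),
          (-1 : ℝ) ^ k * ((n + (i + 1)).choose (k + (i + 1))) * ((2 * k).choose k) / 2 ^ k
        + dawsonSum (n + 1) i := by
        rw [dawsonSum, dawsonSum, ← sum_add_distrib]
        refine sum_congr rfl fun k _ => ?_
        rw [pascal]; ring
    _ = dawsonSum n (i + 1) + dawsonSum (n + 1) i := by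
        rw [sum_range_succ, top, Nat.cast_zero, mul_zero, zero_mul, zero_div, add_zero]
        rfl

theorem two_pow_mul_dawsonSum_zero_right (n : ℕ) :
    2 ^ n * dawsonSum n 0 = ((1 + X ^ 2 : ℝ[X]) ^ n).coeff n := by
  have binom : ((-(1 + X) ^ 2 + 2 * X : ℝ[X]) ^ n).coeff n
      = ∑ k ∈ range (n + 1), (-1 : ℝ) ^ k * (n.choose k) * ((2 * k).choose k) * 2 ^ (n - k) := by
    rw [add_pow, finsetSum_coeff]
    refine sum_congr rfl fun k hk => ?_
    have hk : k ≤ n := Nat.lt_succ_iff.1 (mem_range.1 hk)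
    have term : (-(1 + X) ^ 2 : ℝ[X]) ^ k * (2 * X) ^ (n - k) * (n.choose k : ℝ[X])
        = C ((-1 : ℝ) ^ k * n.choose k * 2 ^ (n - k)) * ((1 + X) ^ (2 * k) * X ^ (n - k)) := by
      rw [neg_pow, ← pow_mul]
      simp only [map_mul, map_pow, map_neg, map_one, C_ofNat, map_natCast]; ring
    rw [term, coeff_C_mul, coeff_mul_X_pow', if_pos (Nat.sub_le n k), Nat.sub_sub_self hk,
      coeff_one_add_X_pow]
    ring
  have h : (-(1 + X) ^ 2 + 2 * X : ℝ[X]) ^ n = C ((-1) ^ n) * (1 + X ^ 2) ^ n := by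
    rw [map_pow, map_neg, map_one, ← mul_pow]; ring
  rw [h, coeff_C_mul] at binom
  have hsum : 2 ^ n * dawsonSum n 0
      = ∑ k ∈ range (n + 1), (-1 : ℝ) ^ k * (n.choose k) * ((2 * k).choose k) * 2 ^ (n - k) := by
    rw [dawsonSum, mul_sum]
    refine sum_congr rfl fun k hk => ?_
    rw [pow_sub₀ _ two_ne_zero (Nat.lt_succ_iff.1 (mem_range.1 hk))]
    simp only [add_zero]
    ring
  rw [hsum, ← binom]
  obtain ⟨m, rfl | rfl⟩ := Nat.even_or_odd' n
  · rw [pow_mul, neg_one_sq, one_pow, one_mul]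
  · rw [coeff_one_add_X_sq_pow_two_mul_add_one, mul_zero]

theorem factorial_mul_dawsonSum (i n : ℕ) :
    ((2 * i)! * n ! * 2 ^ n * dawsonSum n i : ℝ) = i ! * (n + i)! * dawsonCoeff n i := by
  induction i generalizing n with
  | zero => simp [two_pow_mul_dawsonSum_zero_right, dawsonCoeff_zero_right, mul_assoc]
  | succ i ih =>
    induction n with
    | zero =>
      have h := Nat.add_choose_mul_factorial_mul_factorial (i + 1) (i + 1)
      rw [← two_mul] at h
      rw [dawsonSum_zero_left, dawsonCoeff_zero_left, ← h, zero_add]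
      push_cast; ring
    | succ n ihn =>
      have fac_two_mul : ((2 * (i + 1))! : ℝ) = (2 * i)! * (2 * i + 1) * (2 * i + 2) := by
        rw [show 2 * (i + 1) = 2 * i + 1 + 1 by ring, Nat.factorial_succ, Nat.factorial_succ]
        push_cast; ring
      have fac_add : ((n + 1 + (i + 1))! : ℝ) = (n + i + 1)! * (n + i + 2) := by
        rw [show n + 1 + (i + 1) = n + i + 1 + 1 by ring, Nat.factorial_succ]
        push_cast; ring
      have ih' := ih (n + 1)
      rw [show n + 1 + i = n + i + 1 by ring] at ih'
      rw [show n + (i + 1) = n + i + 1 by ring, fac_two_mul] at ihn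
      rw [dawsonSum_succ_succ, fac_two_mul, fac_add]
      rw [Nat.factorial_succ n] at ih' ⊢
      rw [Nat.factorial_succ i] at ihn ⊢
      push_cast at ihn ih' ⊢
      linear_combination 2 * ((n : ℝ) + 1) * ihn + (2 * (i : ℝ) + 1) * (2 * i + 2) * ih'
        - ((i : ℝ) + 1) * i ! * (n + i + 1)! * dawsonCoeff_succ_succ n i

theorem ascPochhammer_mul_centralBinom_add {K : Type*} [Field K] [CharZero K] (m ν : ℕ) :
    (ascPochhammer K ν).eval ((m : K) + 1) * (m + ν).centralBinom
      = 4 ^ ν * m.centralBinom * (ascPochhammer K ν).eval ((m : K) + 1 / 2) := by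
  induction ν with
  | zero => simp
  | succ ν ih =>
    have step : ((m + ν : K) + 1) * (m + ν + 1).centralBinom
        = 2 * (2 * (m + ν) + 1) * (m + ν).centralBinom := by
      exact_mod_cast Nat.succ_mul_centralBinom_succ (m + ν)
    rw [ascPochhammer_succ_eval, ascPochhammer_succ_eval, ← add_assoc]
    linear_combination (ascPochhammer K ν).eval ((m : K) + 1) * step + 2 * (2 * (m + ν) + 1) * ih

theorem Real.Gamma_one_half_sub_nat_mul_factorial (m : ℕ) :
    Gamma (1 / 2 - m) * (2 * m)! = (-4) ^ m * m ! * √π := by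
  induction m with
  | zero => simp [-one_div, Gamma_one_half_eq]
  | succ m ih =>
    have hs : (1 / 2 - (m + 1 : ℕ) : ℝ) ≠ 0 := by
      push_cast; intro h; linarith [(m.cast_nonneg : (0 : ℝ) ≤ m)]
    have shift := Gamma_add_one hs
    rw [show (1 / 2 - (m + 1 : ℕ) : ℝ) + 1 = 1 / 2 - m by push_cast; ring] at shift
    rw [show 2 * (m + 1) = 2 * m + 1 + 1 by ring, Nat.factorial_succ, Nat.factorial_succ,
      Nat.factorial_succ]
    push_cast at shift ⊢
    linear_combination 4 * ((m : ℝ) + 1) * (2 * m)! * shift - 4 * ((m : ℝ) + 1) * ih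

theorem coeff_one_add_X_sq_pow_two_mul_add_eq_gamma (ν j : ℕ) :
    ((1 + X ^ 2 : ℝ[X]) ^ (2 * ν + j)).coeff (2 * ν + j)
      = 4 ^ (ν + j) * π * (ascPochhammer ℝ ν).eval (1 / 2 + (j : ℝ) / 2)
        / (j ! * Gamma (1 / 2 - (j : ℝ) / 2) ^ 2 * (ascPochhammer ℝ ν).eval (1 + (j : ℝ) / 2)) := by
  obtain ⟨m, rfl | rfl⟩ := Nat.even_or_odd' j
  · have half : ((2 * m : ℕ) : ℝ) / 2 = m := by push_cast; ring
    have hΓ := Real.Gamma_one_half_sub_nat_mul_factorial m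
    have hpoch := ascPochhammer_mul_centralBinom_add (K := ℝ) m ν
    have hcentral : (m.centralBinom : ℝ) * m ! * m ! = (2 * m)! := by
      rw [Nat.centralBinom_eq_two_mul_choose, two_mul]
      exact_mod_cast Nat.add_choose_mul_factorial_mul_factorial m m
    have hΓsq : Gamma (1 / 2 - m) ^ 2 * ((2 * m)! : ℝ) ^ 2 = 4 ^ (2 * m) * (m ! * m !) * π := by
      rw [← mul_pow, hΓ, mul_pow, mul_pow, sq_sqrt pi_pos.le, ← pow_mul, mul_comm m 2, pow_mul,
        pow_mul]
      norm_num
      ring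
    have hm : ((m ! : ℝ) * m !) ≠ 0 := by positivity
    rw [half, show 2 * ν + 2 * m = 2 * (ν + m) by ring, coeff_one_add_X_sq_pow_two_mul,
      add_comm ν m, add_comm (1 : ℝ), add_comm (1 / 2 : ℝ)]
    have hΓ0 : Gamma (1 / 2 - m) ≠ 0 := by
      refine left_ne_zero_of_mul (hΓ ▸ ?_ : Gamma (1 / 2 - m) * ((2 * m)! : ℝ) ≠ 0)
      have := sqrt_pos.2 pi_pos
      positivity
    have hQ := ascPochhammer_pos ν ((m : ℝ) + 1) (by positivity)
    rw [eq_div_iff (by positivity)]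
    refine mul_right_cancel₀ hm ?_
    linear_combination ((2 * m)! * Gamma (1 / 2 - m) ^ 2 * (m ! * m !) : ℝ) * hpoch
      + 4 ^ ν * (ascPochhammer ℝ ν).eval ((m : ℝ) + 1 / 2) * (2 * m)! * Gamma (1 / 2 - m) ^ 2
        * hcentral
      + 4 ^ ν * (ascPochhammer ℝ ν).eval ((m : ℝ) + 1 / 2) * hΓsq
  · rw [show 2 * ν + (2 * m + 1) = 2 * (ν + m) + 1 by ring, coeff_one_add_X_sq_pow_two_mul_add_one,
      show (1 / 2 - ((2 * m + 1 : ℕ) : ℝ) / 2) = -m by push_cast; ring, Gamma_neg_nat_eq_zero]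
    simp

/-- `Real.Gamma` is `0` at its poles, so dividing by `Γ(·)^2` there gives `0`, which realises the
convention `1/Γ(x)² = 0` at nonpositive integers. -/
theorem theorem_2_1_even (ν i : ℕ) :
    ∑ k ∈ range (2 * ν + 1),
      (-1 : ℝ) ^ k * ((2 * ν + i).choose (k + i)) * ((2 * k).choose k) / 2 ^ k
      = π * (ascPochhammer ℝ i).eval ((2 * ν + 1 : ℕ) : ℝ)
          * (2 ^ (2 * i) * (i.factorial : ℝ) / ((2 * i).factorial : ℝ))
          * ∑ r ∈ range (i + 1),
              ((i.choose r : ℝ) * (ascPochhammer ℝ ν).eval (1 / 2 + ((i : ℝ) - r) / 2))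
                / (2 ^ r * ((i - r).factorial : ℝ)
                    * (Real.Gamma (1 / 2 + ((r : ℝ) - i) / 2)) ^ 2
                    * (ascPochhammer ℝ ν).eval (1 + ((i : ℝ) - r) / 2)) := by
  have hsum := factorial_mul_dawsonSum i (2 * ν)
  have hpoch : (ascPochhammer ℝ i).eval ((2 * ν + 1 : ℕ) : ℝ) = (2 * ν + i)! / (2 * ν)! := by
    rw [eq_div_iff (by positivity), mul_comm, ← Nat.cast_ascFactorial, ← Nat.cast_mul,
      Nat.factorial_mul_ascFactorial]
  rw [dawsonCoeff_eq_sum, mul_sum] at hsum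
  change dawsonSum (2 * ν) i = _
  rw [hpoch, ← mul_right_inj' (show ((2 * i)! * (2 * ν)! * 2 ^ (2 * ν) : ℝ) ≠ 0 by positivity),
    hsum, mul_sum, mul_sum]
  refine sum_congr rfl fun r hr => ?_
  obtain ⟨j, rfl⟩ := Nat.exists_eq_add_of_le (Nat.lt_succ_iff.1 (mem_range.1 hr))
  rw [show 2 * ν + (r + j) - r = 2 * ν + j by omega, coeff_one_add_X_sq_pow_two_mul_add_eq_gamma,
    show r + j - r = j by omega, show (4 : ℝ) = 2 ^ 2 by norm_num, ← pow_mul]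
  push_cast
  rw [show (1 / 2 + ((r : ℝ) - (r + j)) / 2) = 1 / 2 - j / 2 by ring, add_sub_cancel_left]
  field_simp
  ring
end

section
/- For every natural number ν, ∑_{k=0}^{2ν} (−1)^k · C(2ν, k) · 2^{−k} · C(2k, k) = 2^{−2ν} · C(2ν, ν), with the sum taken over rational (or real) numbers. -/
/-!
Since `C(2k, k)` is the coefficient of `X^k` in `(X + 1)^(2k)`, the binomial theorem turns the
sum `∑ₖ C(n, k) cᵏ C(2k, k)` into the coefficient of `Xⁿ` in `(X + c (X + 1)²)ⁿ`. For `c = -1/2`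
the base collapses to `-(X² + 1)/2`, and the coefficient of `X^(2ν)` in `(X² + 1)^(2ν)` is
`C(2ν, ν)`.
-/

open Finset Polynomial

theorem Polynomial.coeff_pow_X_add_C_mul_X_add_one_sq {R : Type*} [CommSemiring R] (c : R)
    (n : ℕ) :
    ((X + C c * (X + 1) ^ 2) ^ n).coeff n
      = ∑ k ∈ range (n + 1), c ^ k * n.choose k * (2 * k).choose k := by
  rw [add_comm, add_pow, finsetSum_coeff]
  refine sum_congr rfl fun k hk => ?_
  have hterm : (C c * (X + 1) ^ 2) ^ k * X ^ (n - k) * (n.choose k : R[X])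
      = C (c ^ k * n.choose k) * (X + 1) ^ (2 * k) * X ^ (n - k) := by
    rw [mul_pow, ← pow_mul, C_mul, C_pow, ← C_eq_natCast]
    ring
  rw [hterm, coeff_mul_X_pow', if_pos (Nat.sub_le n k),
    Nat.sub_sub_self (mem_range_succ_iff.mp hk), coeff_C_mul, coeff_X_add_one_pow]

theorem Polynomial.coeff_X_sq_add_one_pow {R : Type*} [CommSemiring R] (n k : ℕ) :
    ((X ^ 2 + 1 : R[X]) ^ n).coeff (2 * k) = n.choose k := by
  rw [show (X ^ 2 + 1 : R[X]) = expand R 2 (X + 1) by simp, ← map_pow,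
    coeff_expand_mul' Nat.two_pos, coeff_X_add_one_pow]

/-- Knuth's old sum (Reed Dawson identity), even case: identity (1.1). -/
theorem knuth_old_sum_even (ν : ℕ) :
    ∑ k ∈ Finset.range (2 * ν + 1),
      (-1 : ℚ) ^ k * ((2 * ν).choose k) * ((2 * k).choose k) / 2 ^ k
      = ((2 * ν).choose ν) / 2 ^ (2 * ν) := by
  have hbase : X + C (-1 / 2 : ℚ) * (X + 1) ^ 2 = C (-1 / 2) * (X ^ 2 + 1) := by
    have htwo : C (-1 / 2 : ℚ) * 2 = -1 := by
      rw [← C_ofNat, ← C_mul]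
      norm_num
    linear_combination X * htwo
  calc ∑ k ∈ range (2 * ν + 1), (-1 : ℚ) ^ k * ((2 * ν).choose k) * ((2 * k).choose k) / 2 ^ k
      = ((X + C (-1 / 2 : ℚ) * (X + 1) ^ 2) ^ (2 * ν)).coeff (2 * ν) := by
        rw [coeff_pow_X_add_C_mul_X_add_one_sq]
        refine sum_congr rfl fun k _ => ?_
        rw [div_pow]
        ring
    _ = ((2 * ν).choose ν) / 2 ^ (2 * ν) := by
        rw [hbase, mul_pow, ← C_pow, coeff_C_mul, coeff_X_sq_add_one_pow, div_pow,
          Even.neg_one_pow (even_two_mul ν)]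
        ring
end

section
/- For every natural number ν, ∑_{k=0}^{2ν+1} (−1)^k · C(2ν+1, k) · 2^{−k} · C(2k, k) = 0, with the sum taken over rational (or real) numbers. -/
/-!
Write `C(2k,k) / 2^k` as the binomial transform `∑_m C(k,m) b_m` of the sequence with
`b_m = C(m, m/2) / 2^m` for even `m` and `b_m = 0` for odd `m`: this is the coefficient of `X^k`
in `(1 + X)^(2k) = ((1 + X^2) + 2X)^k`. The alternating sum `∑_k (-1)^k C(n,k) a_k` of a binomial
transform `a` inverts it, giving `(-1)^n b_n`, which vanishes for odd `n`; the inversion is the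
coefficient comparison in `∑_k (-1)^k C(n,k) (1 + X)^k = (-X)^n`.
-/

open Finset Polynomial

theorem sum_neg_one_pow_mul_choose_mul_choose {R : Type*} [CommRing R] (n m : ℕ) :
    ∑ k ∈ range (n + 1), (-1 : R) ^ k * n.choose k * k.choose m =
      if m = n then (-1) ^ n else 0 := by
  have h : ∑ k ∈ range (n + 1), C ((-1 : R) ^ k * n.choose k) * (X + 1) ^ k =
      C ((-1) ^ n) * X ^ n :=
    calc ∑ k ∈ range (n + 1), C ((-1 : R) ^ k * n.choose k) * (X + 1) ^ k
        = ∑ k ∈ range (n + 1), (-(X + 1 : R[X])) ^ k * 1 ^ (n - k) * n.choose k := by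
          refine sum_congr rfl fun k _ => ?_
          simp only [map_mul, map_pow, map_neg, map_one, map_natCast, neg_pow (X + 1 : R[X])]
          ring
      _ = (-(X + 1 : R[X]) + 1) ^ n := (add_pow _ _ _).symm
      _ = C ((-1) ^ n) * X ^ n := by simp [neg_pow (X : R[X])]
  simpa only [finsetSum_coeff, coeff_C_mul, coeff_X_add_one_pow, coeff_X_pow, mul_ite, mul_one,
    mul_zero] using congrArg (coeff · m) h

def binomialTransform {R : Type*} [Semiring R] (b : ℕ → R) (k : ℕ) : R :=
  ∑ j ∈ range (k + 1), (k.choose j : R) * b j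

theorem binomialTransform_eq_sum_range {R : Type*} [Semiring R] (b : ℕ → R) {k n : ℕ}
    (hkn : k ≤ n) : binomialTransform b k = ∑ j ∈ range (n + 1), (k.choose j : R) * b j := by
  refine sum_subset (range_subset_range.2 (by omega)) fun j _ hj => ?_
  rw [Nat.choose_eq_zero_of_lt (by simpa using hj), Nat.cast_zero, zero_mul]

theorem sum_neg_one_pow_mul_choose_mul_binomialTransform {R : Type*} [CommRing R]
    (b : ℕ → R) (n : ℕ) :
    ∑ k ∈ range (n + 1), (-1 : R) ^ k * n.choose k * binomialTransform b k = (-1) ^ n * b n :=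
  calc ∑ k ∈ range (n + 1), (-1 : R) ^ k * n.choose k * binomialTransform b k
      = ∑ j ∈ range (n + 1),
          (∑ k ∈ range (n + 1), (-1 : R) ^ k * n.choose k * k.choose j) * b j := by
        simp_rw [sum_mul, mul_assoc]
        rw [sum_comm]
        refine sum_congr rfl fun k hk => ?_
        rw [binomialTransform_eq_sum_range b (mem_range_succ_iff.1 hk), mul_sum, mul_sum]
    _ = (-1) ^ n * b n := by simp [sum_neg_one_pow_mul_choose_mul_choose]

theorem centralBinom_eq_sum_choose_mul_two_pow (k : ℕ) :
    k.centralBinom =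
      ∑ m ∈ range (k + 1), k.choose m * 2 ^ (k - m) * if 2 ∣ m then m.choose (m / 2) else 0 := by
  have h : (X + 1 : ℕ[X]) ^ (2 * k) = ∑ m ∈ range (k + 1),
      C (k.choose m * 2 ^ (k - m)) * (expand ℕ 2 ((X + 1) ^ m) * X ^ (k - m)) := by
    rw [pow_mul, show (X + 1 : ℕ[X]) ^ 2 = expand ℕ 2 (X + 1) + C 2 * X by simp; ring, add_pow]
    refine sum_congr rfl fun m _ => ?_
    rw [← C_eq_natCast, Nat.cast_id, map_mul, map_pow, map_pow, mul_pow]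
    ring
  have := congrArg (coeff · k) h
  simp only [coeff_X_add_one_pow, finsetSum_coeff, coeff_C_mul, coeff_mul_X_pow', tsub_le_self,
    if_true, coeff_expand two_pos, Nat.cast_id] at this
  rw [Nat.centralBinom_eq_two_mul_choose, this]
  exact sum_congr rfl fun m hm => by rw [Nat.sub_sub_self (mem_range_succ_iff.1 hm)]

theorem centralBinom_div_two_pow_eq_binomialTransform {K : Type*} [Field K] [NeZero (2 : K)]
    (k : ℕ) :
    (k.centralBinom : K) / 2 ^ k =
      binomialTransform (fun m => if 2 ∣ m then (m.choose (m / 2) : K) / 2 ^ m else 0) k := by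
  rw [centralBinom_eq_sum_choose_mul_two_pow, binomialTransform, Nat.cast_sum, sum_div]
  refine sum_congr rfl fun m hm => ?_
  split_ifs
  · push_cast
    rw [pow_sub₀ _ two_ne_zero (mem_range_succ_iff.1 hm)]
    field_simp
  · simp

/-- Knuth's old sum (Reed Dawson identity), odd case: identity (1.2). -/
theorem knuth_old_sum_odd (ν : ℕ) :
    ∑ k ∈ Finset.range (2 * ν + 2),
      (-1 : ℚ) ^ k * ((2 * ν + 1).choose k) * ((2 * k).choose k) / 2 ^ k
      = 0 := by
  have hodd : ¬ 2 ∣ 2 * ν + 1 := by omega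
  simp_rw [mul_div_assoc, ← Nat.centralBinom_eq_two_mul_choose,
    centralBinom_div_two_pow_eq_binomialTransform]
  rw [sum_neg_one_pow_mul_choose_mul_binomialTransform, if_neg hodd, mul_zero]
end

section
/- For every natural number ν, ∑_{k=0}^{2ν} (−1)^k · C(2ν, k) · 2^{−k} · C(2k, k) = (1/2)_ν / (1)_ν, with the sum taken over rational (or real) numbers. -/
/-!
Write `S n = ∑ₖ (-1)ᵏ C(n,k) C(2k,k) / 2ᵏ`. Zeilberger's algorithm produces the certificate
`knuthCertificate`, against which the summands telescope in `k`, giving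
`(n + 2) S(n + 2) = (n + 1) S(n)`. As `S 0 = 1`, the value `S (2ν)` is the product of the
ratios `(2j + 1)/(2j + 2) = (j + 1/2)/(j + 1)` for `j < ν`, which is `(1/2)_ν / (1)_ν`.
-/

open Finset

variable {R : Type*} [CommRing R]

theorem Nat.cast_choose_succ_right_eq (n k : ℕ) :
    (n.choose (k + 1) : R) * (k + 1) = n.choose k * (n - k) := by
  rcases le_or_gt k n with hk | hk
  · simpa [Nat.cast_sub hk] using congrArg (Nat.cast : ℕ → R) (n.choose_succ_right_eq k)
  · simp [Nat.choose_eq_zero_of_lt hk, Nat.choose_eq_zero_of_lt (hk.trans k.lt_succ_self)]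

theorem Nat.cast_choose_mul_succ_eq (n k : ℕ) :
    (n.choose k : R) * (n + 1) = (n + 1).choose k * (n + 1 - k) := by
  rcases le_or_gt k (n + 1) with hk | hk
  · simpa [Nat.cast_sub hk] using congrArg (Nat.cast : ℕ → R) (n.choose_mul_succ_eq k)
  · simp [Nat.choose_eq_zero_of_lt hk, Nat.choose_eq_zero_of_lt (n.lt_succ_self.trans hk)]

theorem Nat.cast_succ_mul_centralBinom_succ (k : ℕ) :
    ((k : R) + 1) * (k + 1).centralBinom = 2 * (2 * k + 1) * k.centralBinom := by
  simpa using congrArg (Nat.cast : ℕ → R) k.succ_mul_centralBinom_succ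

variable {K : Type*} [Field K]

def knuthTerm (n k : ℕ) : K := (-1) ^ k * n.choose k * k.centralBinom / 2 ^ k

def knuthSum (n : ℕ) : K := ∑ k ∈ range (n + 1), knuthTerm n k

def knuthCertificate (n k : ℕ) : K :=
  -((-1) ^ k * k ^ 2 * (n + 2).choose k * k.centralBinom) / (2 ^ k * (n + 2))

theorem knuthTerm_eq_zero_of_lt {n k : ℕ} (h : n < k) : knuthTerm n k = (0 : K) := by
  simp [knuthTerm, Nat.choose_eq_zero_of_lt h]

variable [CharZero K]

theorem knuth_wz_pair (n k : ℕ) :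
    (n + 2 : K) * knuthTerm (n + 2) k - (n + 1) * knuthTerm n k
      = knuthCertificate n (k + 1) - knuthCertificate n k := by
  have hn : (n : K) + 2 ≠ 0 := by exact_mod_cast (n + 1).succ_ne_zero
  have hcentral := Nat.cast_succ_mul_centralBinom_succ (R := K) k
  have hnext := Nat.cast_choose_succ_right_eq (R := K) (n + 2) k
  have hprev₁ := Nat.cast_choose_mul_succ_eq (R := K) n k
  have hprev₂ := Nat.cast_choose_mul_succ_eq (R := K) (n + 1) k
  push_cast at hnext hprev₂
  simp only [knuthTerm, knuthCertificate]
  field_simp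
  push_cast
  linear_combination
    -2 ^ (k + 1) * (-1) ^ k * (k.centralBinom : K) * ((n + 2) * hprev₁ + (n + 1 - k) * hprev₂)
      - 2 ^ k * (-1) ^ k * ((k + 1) * ((k + 1).centralBinom : K) * hnext
        + ((n + 2).choose k) * (n + 2 - k) * hcentral)

theorem knuthSum_recurrence (n : ℕ) :
    (n + 2 : K) * knuthSum (n + 2) = (n + 1) * knuthSum n := by
  have htelescope := sum_range_sub (knuthCertificate (K := K) n) (n + 3)
  have hlast : knuthCertificate n (n + 3) = (0 : K) := by simp [knuthCertificate]
  have hfirst : knuthCertificate n 0 = (0 : K) := by simp [knuthCertificate]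
  have hpad : ∑ k ∈ range (n + 3), knuthTerm n k = (knuthSum n : K) := by
    rw [sum_range_succ, sum_range_succ, knuthTerm_eq_zero_of_lt (by omega),
      knuthTerm_eq_zero_of_lt (by omega), add_zero, add_zero, knuthSum]
  simp only [← knuth_wz_pair, sum_sub_distrib, ← mul_sum, hpad, hlast, hfirst] at htelescope
  rw [knuthSum]
  linear_combination htelescope

theorem knuthSum_two_mul (ν : ℕ) :
    knuthSum (2 * ν) = (ascPochhammer K ν).eval (1 / 2) / (ascPochhammer K ν).eval 1 := by
  induction ν with
  | zero => simp [knuthSum, knuthTerm]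
  | succ ν ih =>
    have hrec := knuthSum_recurrence (K := K) (2 * ν)
    have hν : 1 + (ν : K) ≠ 0 := by rw [add_comm]; exact_mod_cast ν.succ_ne_zero
    rw [ascPochhammer_succ_eval, ascPochhammer_succ_eval, mul_div_mul_comm, ← ih,
      show 2 * (ν + 1) = 2 * ν + 2 by ring]
    push_cast at hrec
    field_simp
    linear_combination hrec

/-- Identity (3.1): the `i = 0` case of Theorem 2.1, equivalent to Knuth's old sum. -/
theorem knuth_old_sum_even_pochhammer (ν : ℕ) :
    ∑ k ∈ Finset.range (2 * ν + 1),
      (-1 : ℚ) ^ k * ((2 * ν).choose k) * ((2 * k).choose k) / 2 ^ k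
      = (ascPochhammer ℚ ν).eval (1 / 2) / (ascPochhammer ℚ ν).eval 1 := by
  simpa [knuthSum, knuthTerm, Nat.centralBinom_eq_two_mul_choose] using
    knuthSum_two_mul (K := ℚ) ν
end

section
/- For every natural number ν, ∑_{k=0}^{2ν+1} (−1)^k · C(2ν+2, k+1) · 2^{−k} · C(2k, k) = (ν+1) · (3/2)_ν / (2)_ν, with the sum taken over rational (or real) numbers. -/
/-!
Write `A n = ∑ₖ (-1)ᵏ C(n,k) C(2k,k) / 2ᵏ`. Pascal's rule `C(N+1,k+1) = C(N,k) + C(N,k+1)` turns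
the left-hand side into `A 0 + ⋯ + A (2ν+1)`. A Wilf–Zeilberger certificate gives the recurrence
`(n + 2) A (n + 2) = (n + 1) A n`, whence `A (2m) = C(2m,m) / 4ᵐ` and `A (2m+1) = 0`; the partial sums
of `C(2m,m) / 4ᵐ` equal `(2ν+1) C(2ν,ν) / 4^ν`, which is the right-hand side once the
Pochhammer symbols are written with factorials.
-/

open Finset

namespace Riordan

variable {K : Type*}

section CommRing

variable [CommRing K]

theorem cast_choose_succ_right_mul (n k : ℕ) :
    (n.choose (k + 1) : K) * (k + 1) = n.choose k * (n - k) := by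
  rcases le_or_gt k n with h | h
  · exact_mod_cast congrArg (Nat.cast : ℕ → K) (Nat.choose_succ_right_eq n k)
  · simp [Nat.choose_eq_zero_of_lt h, Nat.choose_eq_zero_of_lt (h.trans k.lt_succ_self)]

theorem cast_choose_mul_succ (n k : ℕ) :
    (n.choose k : K) * (n + 1) = (n + 1).choose k * (n + 1 - k) := by
  rcases le_or_gt k (n + 1) with h | h
  · exact_mod_cast congrArg (Nat.cast : ℕ → K) (Nat.choose_mul_succ_eq n k)
  · simp [Nat.choose_eq_zero_of_lt h, Nat.choose_eq_zero_of_lt (n.lt_succ_self.trans h)]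

theorem cast_succ_mul_centralBinom_succ (n : ℕ) :
    ((n : K) + 1) * (n + 1).centralBinom = 2 * (2 * n + 1) * n.centralBinom := by
  exact_mod_cast congrArg (Nat.cast : ℕ → K) (Nat.succ_mul_centralBinom_succ n)

end CommRing

theorem ascPochhammer_eval_two [Semiring K] (ν : ℕ) :
    (ascPochhammer K ν).eval 2 = (ν + 1).factorial := by
  simpa [one_add_one_eq_two, add_comm] using factorial_mul_ascPochhammer K 1 ν

section Field

variable (K) [Field K]

def altTerm (n k : ℕ) : K := (-1) ^ k * n.choose k * k.centralBinom / 2 ^ k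

def altSum (n : ℕ) : K := ∑ k ∈ range (n + 1), altTerm K n k

def wzCert (n k : ℕ) : K := (-1) ^ k * k ^ 2 * (n + 2).choose k * k.centralBinom / 2 ^ k

def shiftedSum (N : ℕ) : K := ∑ k ∈ range N, (-1) ^ k * N.choose (k + 1) * k.centralBinom / 2 ^ k

variable {K}

theorem altTerm_eq_zero_of_lt {n k : ℕ} (h : n < k) : altTerm K n k = 0 := by
  simp [altTerm, Nat.choose_eq_zero_of_lt h]

theorem shiftedSum_succ (N : ℕ) : shiftedSum K (N + 1) = shiftedSum K N + altSum K N := by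
  have hpascal (k : ℕ) : (-1 : K) ^ k * (N + 1).choose (k + 1) * k.centralBinom / 2 ^ k
      = altTerm K N k + (-1) ^ k * N.choose (k + 1) * k.centralBinom / 2 ^ k := by
    rw [altTerm, Nat.choose_succ_succ']
    push_cast
    ring
  rw [shiftedSum, sum_congr rfl fun k _ => hpascal k, sum_add_distrib,
    sum_range_succ (fun k => (-1 : K) ^ k * N.choose (k + 1) * k.centralBinom / 2 ^ k) N,
    Nat.choose_succ_self, shiftedSum, altSum]
  simp only [Nat.cast_zero, mul_zero, zero_mul, zero_div, add_zero]
  ring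

variable [CharZero K]

theorem altTerm_wz (n k : ℕ) :
    ((n : K) + 2) ^ 2 * altTerm K (n + 2) k - (n + 1) * (n + 2) * altTerm K n k
      = wzCert K n k - wzCert K n (k + 1) := by
  -- each relation rewrites a shifted factor in terms of `C(n+2,k)` and `C(2k,k)`
  have hchoose := cast_choose_succ_right_mul (K := K) (n + 2) k
  have hchoose₀ := cast_choose_mul_succ (K := K) n k
  have hchoose₁ := cast_choose_mul_succ (K := K) (n + 1) k
  have hcb : (2⁻¹ : K) * ((k + 1) * (k + 1).centralBinom) = (2 * k + 1) * k.centralBinom := by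
    rw [inv_mul_eq_iff_eq_mul₀ two_ne_zero, ← mul_assoc, cast_succ_mul_centralBinom_succ]
  push_cast at hchoose hchoose₀ hchoose₁
  unfold altTerm wzCert
  push_cast
  linear_combination (-(-1) ^ k / 2 ^ k * k.centralBinom * (n + 2)) * hchoose₀
    - (-1) ^ k / 2 ^ k * k.centralBinom * (n + 1 - k) * hchoose₁
    - (-1) ^ k / 2 ^ (k + 1) * ((k + 1) * (k + 1).centralBinom) * hchoose
    - (-1) ^ k / 2 ^ k * (n + 2).choose k * (n + 2 - k) * hcb

theorem altSum_add_two (n : ℕ) : ((n : K) + 2) * altSum K (n + 2) = (n + 1) * altSum K n := by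
  have hA : altSum K n = ∑ k ∈ range (n + 3), altTerm K n k :=
    (eventually_constant_sum (fun k hk => altTerm_eq_zero_of_lt hk) (by omega)).symm
  have hcert0 : wzCert K n 0 = 0 := by simp [wzCert]
  have hcert : wzCert K n (n + 3) = 0 := by simp [wzCert]
  have htel : ((n : K) + 2) ^ 2 * altSum K (n + 2) - (n + 1) * (n + 2) * altSum K n = 0 := by
    rw [hA, altSum, mul_sum, mul_sum, ← sum_sub_distrib, sum_congr rfl fun k _ => altTerm_wz n k,
      sum_range_sub', hcert0, hcert, sub_zero]
  have hn : (n : K) + 2 ≠ 0 := by exact_mod_cast (n + 1).succ_ne_zero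
  apply mul_left_cancel₀ hn
  linear_combination htel

theorem altSum_two_mul_add_one (m : ℕ) : altSum K (2 * m + 1) = 0 := by
  induction m with
  | zero => norm_num [altSum, altTerm, sum_range_succ, Nat.centralBinom]
  | succ m ih =>
    have h := altSum_add_two (K := K) (2 * m + 1)
    rw [ih, mul_zero] at h
    have hm : ((2 * m + 1 : ℕ) : K) + 2 ≠ 0 := by exact_mod_cast (2 * m + 2).succ_ne_zero
    exact (mul_eq_zero.mp h).resolve_left hm

theorem altSum_two_mul (m : ℕ) : altSum K (2 * m) = m.centralBinom / 4 ^ m := by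
  induction m with
  | zero => simp [altSum, altTerm]
  | succ m ih =>
    have h := altSum_add_two (K := K) (2 * m)
    rw [ih] at h
    push_cast at h
    have hm : (2 * m : K) + 2 ≠ 0 := by exact_mod_cast (2 * m + 1).succ_ne_zero
    rw [mul_add_one]
    apply mul_left_cancel₀ hm
    rw [h, pow_succ]
    field_simp
    linear_combination -2 * cast_succ_mul_centralBinom_succ (K := K) m

theorem shiftedSum_two_mul_add_two (ν : ℕ) :
    shiftedSum K (2 * ν + 2) = (2 * ν + 1) * ν.centralBinom / 4 ^ ν := by
  induction ν with
  | zero => norm_num [shiftedSum, sum_range_succ, Nat.centralBinom]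
  | succ ν ih =>
    rw [show 2 * (ν + 1) + 2 = 2 * (ν + 1) + 1 + 1 by ring, shiftedSum_succ, shiftedSum_succ,
      altSum_two_mul, altSum_two_mul_add_one, show 2 * (ν + 1) = 2 * ν + 2 by ring, ih]
    push_cast
    field_simp
    linear_combination -2 * 4 ^ ν * cast_succ_mul_centralBinom_succ (K := K) ν

theorem ascPochhammer_eval_three_halves_mul_four_pow (ν : ℕ) :
    (ascPochhammer K ν).eval (3 / 2) * 4 ^ ν = (2 * ν + 1) * ν.centralBinom * ν.factorial := by
  induction ν with
  | zero => simp
  | succ ν ih =>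
    rw [ascPochhammer_succ_eval, pow_succ, Nat.factorial_succ]
    push_cast
    linear_combination
      4 * (3 / 2 + (ν : K)) * ih - (2 * ν + 3) * ν.factorial * cast_succ_mul_centralBinom_succ (K := K) ν

theorem succ_mul_ascPochhammer_eval_three_halves_div_eval_two (ν : ℕ) :
    (ν + 1) * (ascPochhammer K ν).eval (3 / 2) / (ascPochhammer K ν).eval 2
      = (2 * ν + 1) * ν.centralBinom / 4 ^ ν := by
  rw [ascPochhammer_eval_two, div_eq_div_iff (by exact_mod_cast (ν + 1).factorial_ne_zero)
    (pow_ne_zero _ (by norm_num)), Nat.factorial_succ]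
  push_cast
  linear_combination (ν + 1 : K) * ascPochhammer_eval_three_halves_mul_four_pow (K := K) ν

end Field

end Riordan

/-- Identity (3.4): the odd case of Theorem 2.1 with `i = 1`,
equivalent to Riordan's identity (1.7). -/
theorem riordan_odd_pochhammer (ν : ℕ) :
    ∑ k ∈ Finset.range (2 * ν + 2),
      (-1 : ℚ) ^ k * ((2 * ν + 2).choose (k + 1)) * ((2 * k).choose k) / 2 ^ k
      = (ν + 1) * (ascPochhammer ℚ ν).eval (3 / 2) / (ascPochhammer ℚ ν).eval 2 :=
  (Riordan.shiftedSum_two_mul_add_two ν).trans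
    (Riordan.succ_mul_ascPochhammer_eval_three_halves_div_eval_two ν).symm
end

section
/- For every natural number ν, ∑_{k=0}^{2ν} (−1)^k · C(2ν+2, k+2) · 2^{−k} · C(2k, k) = (1/3) · (4ν+3) · (3/2)_ν / (1)_ν, with the sum taken over rational (or real) numbers. -/
/-!
Let `T n = ∑ₖ (-1)ᵏ C(n+2, k+2) C(2k, k) / 2ᵏ`, so the theorem evaluates `T (2ν)`.
Zeilberger's certificate `G n k = (-1)^(k+1) (n+3) k C(2k, k) C(n+2, k) / ((k+1) 2ᵏ)`
telescopes to the recurrence `(n+2) T (n+2) = 2 T (n+1) + (n+3) T n`. Since the recurrence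
mixes parities, the induction carries the odd values `T (2ν+1) = (2/3) (2ν+3) (3/2)_ν / (1)_ν`
along with the even ones.
-/

open Finset

theorem Nat.cast_choose_succ_mul {R : Type*} [CommRing R] (n k : ℕ) :
    (n.choose (k + 1) : R) * (k + 1) = n.choose k * (n - k) := by
  rcases le_or_gt k n with h | h
  · rw [← Nat.cast_sub h]
    exact_mod_cast congrArg (Nat.cast (R := R)) (Nat.choose_succ_right_eq n k)
  · simp [Nat.choose_eq_zero_of_lt h, Nat.choose_eq_zero_of_lt (Nat.lt_succ_of_lt h)]

theorem Nat.choose_add_two_add_two (n k : ℕ) :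
    (n + 2).choose (k + 2) = n.choose k + 2 * n.choose (k + 1) + n.choose (k + 2) := by
  rw [Nat.choose_succ_succ', Nat.choose_succ_succ', Nat.choose_succ_succ']
  ring

def summand (n k : ℕ) : ℚ :=
  (-1) ^ k * ((n + 2).choose (k + 2)) * ((2 * k).choose k) / 2 ^ k

def certificate (n k : ℕ) : ℚ :=
  (-1) ^ (k + 1) * (n + 3) * k * ((2 * k).choose k) * ((n + 2).choose k) / ((k + 1) * 2 ^ k)

theorem summand_eq_zero_of_lt {n k : ℕ} (h : n < k) : summand n k = 0 := by
  simp [summand, Nat.choose_eq_zero_of_lt (by omega : n + 2 < k + 2)]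

theorem certificate_zero (n : ℕ) : certificate n 0 = 0 := by
  simp [certificate]

theorem certificate_eq_zero_of_lt {n k : ℕ} (h : n + 2 < k) : certificate n k = 0 := by
  simp [certificate, Nat.choose_eq_zero_of_lt h]

theorem summand_telescope (n k : ℕ) :
    (n + 2) * summand (n + 2) k - 2 * summand (n + 1) k - (n + 3) * summand n k
      = certificate n (k + 1) - certificate n k := by
  simp only [summand, certificate]
  push_cast
  set c : ℚ := ((n + 2).choose k : ℚ)
  set c₁ : ℚ := ((n + 2).choose (k + 1) : ℚ)
  set c₂ : ℚ := ((n + 2).choose (k + 2) : ℚ)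
  have hc₁ : c₁ = c * (n + 2 - k) / (k + 1) := by
    rw [eq_div_iff (by positivity)]
    simpa using Nat.cast_choose_succ_mul (R := ℚ) (n + 2) k
  have hc₂ : c₂ = c₁ * (n + 1 - k) / (k + 2) := by
    rw [eq_div_iff (by positivity)]
    have := Nat.cast_choose_succ_mul (R := ℚ) (n + 2) (k + 1)
    push_cast at this
    linear_combination this
  have hb : ((2 * (k + 1)).choose (k + 1) : ℚ)
      = 2 * (2 * k + 1) * (2 * k).choose k / (k + 1) := by
    rw [eq_div_iff (by positivity)]
    have := Nat.succ_mul_centralBinom_succ k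
    simp only [Nat.centralBinom] at this
    exact_mod_cast (mul_comm _ _).trans this
  have h₄ : ((n + 2 + 2).choose (k + 2) : ℚ) = c + 2 * c₁ + c₂ := by
    simp [Nat.choose_add_two_add_two, c, c₁, c₂]
  have h₃ : ((n + 1 + 2).choose (k + 2) : ℚ) = c₁ + c₂ := by
    simp [show n + 1 + 2 = n + 2 + 1 by ring, Nat.choose_succ_succ', c₁, c₂]
  rw [h₄, h₃, hb, hc₂, hc₁]
  field_simp
  ring

def binomSum (n : ℕ) : ℚ := ∑ k ∈ range (n + 1), summand n k

theorem binomSum_eq_sum_range {n N : ℕ} (h : n < N) :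
    binomSum n = ∑ k ∈ range N, summand n k :=
  sum_subset (range_subset_range.2 h) fun _ _ hk =>
    summand_eq_zero_of_lt (by simpa using hk)

theorem binomSum_recurrence (n : ℕ) :
    (n + 2) * binomSum (n + 2) = 2 * binomSum (n + 1) + (n + 3) * binomSum n := by
  have telescoped : ∑ k ∈ range (n + 3),
      ((n + 2) * summand (n + 2) k - 2 * summand (n + 1) k - (n + 3) * summand n k) = 0 := by
    rw [sum_congr rfl fun k _ => summand_telescope n k, sum_range_sub,
      certificate_zero, certificate_eq_zero_of_lt (by omega), sub_zero]
  rw [binomSum_eq_sum_range (n := n + 2) (N := n + 3) (by omega),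
    binomSum_eq_sum_range (n := n + 1) (N := n + 3) (by omega),
    binomSum_eq_sum_range (n := n) (N := n + 3) (by omega), mul_sum, mul_sum, mul_sum,
    ← sub_eq_zero, ← telescoped, ← sum_add_distrib, ← sum_sub_distrib]
  exact sum_congr rfl fun k _ => by ring

noncomputable def pochhammerRatio (ν : ℕ) : ℚ :=
  (ascPochhammer ℚ ν).eval (3 / 2) / (ascPochhammer ℚ ν).eval 1

theorem pochhammerRatio_succ (ν : ℕ) :
    pochhammerRatio (ν + 1) = pochhammerRatio ν * (2 * ν + 3) / (2 * ν + 2) := by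
  have hpos : 0 < (ascPochhammer ℚ ν).eval 1 := ascPochhammer_pos ν 1 one_pos
  simp only [pochhammerRatio, ascPochhammer_succ_eval]
  field_simp
  ring

theorem binomSum_two_mul (ν : ℕ) :
    binomSum (2 * ν) = (4 * ν + 3) / 3 * pochhammerRatio ν
      ∧ binomSum (2 * ν + 1) = 2 * (2 * ν + 3) / 3 * pochhammerRatio ν := by
  induction ν with
  | zero => norm_num [binomSum, summand, pochhammerRatio, sum_range_succ]
  | succ ν ih =>
    obtain ⟨h_even, h_odd⟩ := ih
    have rec_even := binomSum_recurrence (2 * ν)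
    have rec_odd := binomSum_recurrence (2 * ν + 1)
    rw [show 2 * ν + 1 + 2 = 2 * (ν + 1) + 1 by ring, show 2 * ν + 1 + 1 = 2 * (ν + 1) by ring]
      at rec_odd
    rw [show 2 * ν + 2 = 2 * (ν + 1) by ring] at rec_even
    push_cast at rec_even rec_odd ⊢
    have h_even' : binomSum (2 * (ν + 1)) = (4 * (ν + 1) + 3) / 3 * pochhammerRatio (ν + 1) := by
      apply mul_left_cancel₀ (by positivity : (2 * ν + 2 : ℚ) ≠ 0)
      rw [rec_even, h_odd, h_even, pochhammerRatio_succ]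
      field_simp
      ring
    refine ⟨h_even', ?_⟩
    apply mul_left_cancel₀ (by positivity : (2 * ν + 1 + 2 : ℚ) ≠ 0)
    rw [rec_odd, h_odd, h_even', pochhammerRatio_succ]
    field_simp
    ring

/-- Identity (3.5): the even case of Theorem 2.1 with `i = 2`. -/
theorem theorem_2_1_even_i_two (ν : ℕ) :
    ∑ k ∈ Finset.range (2 * ν + 1),
      (-1 : ℚ) ^ k * ((2 * ν + 2).choose (k + 2)) * ((2 * k).choose k) / 2 ^ k
      = (1 / 3) * (4 * ν + 3) * (ascPochhammer ℚ ν).eval (3 / 2)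
          / (ascPochhammer ℚ ν).eval 1 := by
  rw [mul_div_assoc, one_div_mul_eq_div]
  exact (binomSum_two_mul ν).1
end

section
/- For every natural number ν, ∑_{k=0}^{2ν+1} (−1)^k · C(2ν+3, k+2) · 2^{−k} · C(2k, k) = 2 · (5/2)_ν / (1)_ν, with the sum taken over rational (or real) numbers. -/
/-!
Write `S n = ∑ₖ (-1)ᵏ C(n, k+2) C(2k, k) / 2ᵏ`. Zeilberger's algorithm gives a rational multiple
`G n k` of a hypergeometric term in `k` such that the summands of
`(n+1)(n+2) S(n+4) - (2n² + 6n + 7) S(n+2) + (n+1)(n+2) S n` telescope to `G n (k+1) - G n k`;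
since `G n` vanishes at both ends, `S` satisfies this recurrence for every `n`. For odd `n = 2ν + 3`
the right-hand side `2 (5/2)_ν / ν!` satisfies it too, as it grows by the factor `(2ν+5)/(2ν+2)`,
and the two sequences agree at `ν = 0, 1`.
-/

open Finset

theorem Nat.cast_choose_succ_right_mul {R : Type*} [Ring R] (n k : ℕ) :
    (n.choose (k + 1) : R) * (k + 1) = n.choose k * (n - k) := by
  rcases le_or_gt k n with h | h
  · have := congrArg (Nat.cast : ℕ → R) (Nat.choose_succ_right_eq n k)
    push_cast [Nat.cast_sub h] at this
    exact this
  · simp [Nat.choose_eq_zero_of_lt h, Nat.choose_eq_zero_of_lt (h.trans k.lt_succ_self)]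

theorem Nat.cast_choose_mul_succ {R : Type*} [Ring R] (n k : ℕ) :
    (n.choose k : R) * (n + 1) = (n + 1).choose k * (n + 1 - k) := by
  rcases le_or_gt k (n + 1) with h | h
  · have := congrArg (Nat.cast : ℕ → R) (Nat.choose_mul_succ_eq n k)
    push_cast [Nat.cast_sub h] at this
    exact this
  · simp [Nat.choose_eq_zero_of_lt h, Nat.choose_eq_zero_of_lt (n.lt_succ_self.trans h)]

theorem eq_of_second_order_recurrence {R : Type*} [CommRing R] [IsDomain R] {a b : ℕ → R}
    (p q r : ℕ → R) (hp : ∀ n, p n ≠ 0)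
    (ha : ∀ n, p n * a (n + 2) = q n * a (n + 1) + r n * a n)
    (hb : ∀ n, p n * b (n + 2) = q n * b (n + 1) + r n * b n)
    (h₀ : a 0 = b 0) (h₁ : a 1 = b 1) : a = b := by
  have key : ∀ n, a n = b n ∧ a (n + 1) = b (n + 1) := by
    intro n
    induction n with
    | zero => exact ⟨h₀, h₁⟩
    | succ n ih =>
      refine ⟨ih.2, mul_left_cancel₀ (hp n) ?_⟩
      rw [ha, hb, ih.1, ih.2]
  exact funext fun n => (key n).1

namespace ShiftedCentralBinom

def term (n k : ℕ) : ℚ :=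
  (-1) ^ k * n.choose (k + 2) * k.centralBinom / 2 ^ k

def sum (n : ℕ) : ℚ :=
  ∑ k ∈ range (n + 1), term n k

def certificate (n k : ℕ) : ℚ :=
  (-1) ^ k * k * ((k : ℚ) ^ 2 - (2 * n + 1) * k - (3 * n + 5)) * (n + 2).choose k *
    k.centralBinom / (2 ^ k * (k + 1))

theorem term_eq_zero_of_lt {n k : ℕ} (h : n < k + 2) : term n k = 0 := by
  simp [term, Nat.choose_eq_zero_of_lt h]

theorem sum_range_eq_sum {n N : ℕ} (h : n ≤ N + 1) :
    ∑ k ∈ range N, term n k = sum n := by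
  rcases le_total N (n + 1) with hN | hN
  · exact sum_subset (range_subset_range.2 hN) fun k _ hk =>
      term_eq_zero_of_lt (by simp only [mem_range, not_lt] at hk; omega)
  · exact (sum_subset (range_subset_range.2 hN) fun k _ hk =>
      term_eq_zero_of_lt (by simp only [mem_range, not_lt] at hk; omega)).symm

theorem certificate_zero (n : ℕ) : certificate n 0 = 0 := by
  simp [certificate]

theorem certificate_add_three (n : ℕ) : certificate n (n + 3) = 0 := by
  simp [certificate]

theorem term_recurrence (n k : ℕ) :
    (n + 1) * (n + 2) * term (n + 4) k - (2 * n ^ 2 + 6 * n + 7) * term (n + 2) k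
      + (n + 1) * (n + 2) * term n k = certificate n (k + 1) - certificate n k := by
  have hk₁ : (k : ℚ) + 1 ≠ 0 := by positivity
  have hk₂ : (k : ℚ) + 2 ≠ 0 := by positivity
  have hn₁ : (n : ℚ) + 1 ≠ 0 := by positivity
  have hn₂ : (n : ℚ) + 2 ≠ 0 := by positivity
  set a : ℚ := ((n + 2).choose k : ℚ) with ha
  have c₁ := Nat.cast_choose_succ_right_mul (R := ℚ) (n + 2) k
  have c₂ := Nat.cast_choose_succ_right_mul (R := ℚ) (n + 2) (k + 1)
  push_cast at c₁ c₂
  have e₁ : ((n + 2).choose (k + 1) : ℚ) = a * (n + 2 - k) / (k + 1) := by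
    rw [eq_div_iff hk₁]; linear_combination c₁
  have e₂ : ((n + 2).choose (k + 2) : ℚ) =
      a * (n + 2 - k) * (n + 1 - k) / ((k + 1) * (k + 2)) := by
    rw [eq_div_iff (mul_ne_zero hk₁ hk₂)]
    linear_combination (k + 1) * c₂ + (n + 1 - k) * c₁
  have e₃ : ((n + 4).choose (k + 2) : ℚ) =
      a + 2 * ((n + 2).choose (k + 1) : ℚ) + ((n + 2).choose (k + 2) : ℚ) := by
    simp only [Nat.choose_succ_succ, ha]
    push_cast
    ring
  have e₄ : (n.choose (k + 2) : ℚ) =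
      ((n + 2).choose (k + 2) : ℚ) * (n - k - 1) * (n - k) / ((n + 1) * (n + 2)) := by
    have h₁ := Nat.cast_choose_mul_succ (R := ℚ) n (k + 2)
    have h₂ := Nat.cast_choose_mul_succ (R := ℚ) (n + 1) (k + 2)
    push_cast at h₁ h₂
    rw [eq_div_iff (mul_ne_zero hn₁ hn₂)]
    linear_combination ((n : ℚ) + 2) * h₁ + ((n : ℚ) - k - 1) * h₂
  have e₅ : ((k + 1).centralBinom : ℚ) = 2 * (2 * k + 1) * k.centralBinom / (k + 1) := by
    rw [eq_div_iff hk₁]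
    exact_mod_cast (mul_comm _ _).trans (Nat.succ_mul_centralBinom_succ k)
  simp only [term, certificate]
  push_cast
  rw [e₄, e₃, e₂, e₁, e₅, pow_succ, pow_succ]
  field_simp
  ring

theorem sum_recurrence (n : ℕ) :
    (n + 1) * (n + 2) * sum (n + 4)
      = (2 * n ^ 2 + 6 * n + 7) * sum (n + 2) - (n + 1) * (n + 2) * sum n := by
  rw [← sum_range_eq_sum (N := n + 3) (by omega), ← sum_range_eq_sum (N := n + 3) (by omega),
    ← sum_range_eq_sum (N := n + 3) (by omega), eq_sub_iff_add_eq, ← sub_eq_zero]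
  have telescope := Finset.sum_range_sub (certificate n) (n + 3)
  simp only [← term_recurrence, certificate_zero, certificate_add_three, sub_zero] at telescope
  rw [mul_sum, mul_sum, mul_sum, ← telescope, ← sum_add_distrib, ← sum_sub_distrib]
  refine sum_congr rfl fun k _ => ?_
  ring

noncomputable def closedForm (ν : ℕ) : ℚ :=
  2 * (ascPochhammer ℚ ν).eval (5 / 2) / (ascPochhammer ℚ ν).eval 1

theorem closedForm_succ_mul (ν : ℕ) :
    closedForm (ν + 1) * (2 * ν + 2) = closedForm ν * (2 * ν + 5) := by
  simp only [closedForm, ascPochhammer_eval_one, ascPochhammer_succ_eval]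
  field_simp
  ring

theorem closedForm_recurrence (ν : ℕ) :
    (2 * ν + 4) * (2 * ν + 5) * closedForm (ν + 2)
      = (8 * ν ^ 2 + 36 * ν + 43) * closedForm (ν + 1)
        - (2 * ν + 4) * (2 * ν + 5) * closedForm ν := by
  have h₁ := closedForm_succ_mul ν
  have h₂ := closedForm_succ_mul (ν + 1)
  push_cast at h₂
  linear_combination (2 * (ν : ℚ) + 5) * h₂ - (2 * (ν : ℚ) + 4) * h₁

theorem sum_two_mul_add_three_eq_closedForm (ν : ℕ) : sum (2 * ν + 3) = closedForm ν := by
  refine congrFun (eq_of_second_order_recurrence (a := fun ν => sum (2 * ν + 3))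
    (fun ν : ℕ => (2 * ν + 4) * (2 * ν + 5 : ℚ)) (fun ν : ℕ => 8 * ν ^ 2 + 36 * ν + 43)
    (fun ν : ℕ => -((2 * ν + 4) * (2 * ν + 5))) (fun ν => by positivity) (fun ν => ?_)
    (fun ν => by linear_combination closedForm_recurrence ν) ?_ ?_) ν
  · have h := sum_recurrence (2 * ν + 3)
    rw [show 2 * ν + 3 + 4 = 2 * (ν + 2) + 3 by ring,
      show 2 * ν + 3 + 2 = 2 * (ν + 1) + 3 by ring] at h
    push_cast at h
    linear_combination h
  · norm_num [sum, term, sum_range_succ, Nat.centralBinom, Nat.choose, closedForm]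
  · norm_num [sum, term, sum_range_succ, Nat.centralBinom, Nat.choose, closedForm,
      ascPochhammer_succ_eval]

end ShiftedCentralBinom

/-- Identity (3.6): the odd case of Theorem 2.1 with `i = 2`. -/
theorem theorem_2_1_odd_i_two (ν : ℕ) :
    ∑ k ∈ Finset.range (2 * ν + 2),
      (-1 : ℚ) ^ k * ((2 * ν + 3).choose (k + 2)) * ((2 * k).choose k) / 2 ^ k
      = 2 * (ascPochhammer ℚ ν).eval (5 / 2) / (ascPochhammer ℚ ν).eval 1 := by
  have h := (ShiftedCentralBinom.sum_range_eq_sum (N := 2 * ν + 2) (by omega)).trans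
    (ShiftedCentralBinom.sum_two_mul_add_three_eq_closedForm ν)
  simpa only [ShiftedCentralBinom.term, ShiftedCentralBinom.closedForm,
    Nat.centralBinom_eq_two_mul_choose] using h
end

section
/- For every natural number ν, ∑_{k=0}^{2ν} (−1)^k · C(2ν+3, k+3) · 2^{−k} · C(2k, k) = (1/5) · (8ν+5) · (5/2)_ν / (1)_ν, with the sum taken over rational (or real) numbers. -/
/-!
Write `A n i = ∑ₖ (-1)ᵏ C(n, k+i) C(2k, k) / 2ᵏ`. Pascal's rule gives
`A (n+1) (i+1) = A n (i+1) + A n i`. For `i = 0` the WZ certificate `k²` makes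
`(n+2)((n+2) A (n+2) 0 - (n+1) A n 0)` telescope to zero, so `A (2ν) 0 = (1/2)_ν / ν!` and
`A (2ν+1) 0 = 0`. Climbing to `i = 3` with Pascal's rule, each level is a polynomial in `ν` times
`(1/2)_ν / ν!` (by induction on `ν`), and `3 (5/2)_ν = (2ν+1)(2ν+3) (1/2)_ν` finishes.
-/

open Finset Polynomial Nat

namespace Nat

variable {R : Type*}

theorem cast_choose_succ_mul_s12 [Ring R] (m k : ℕ) :
    (m.choose (k + 1) : R) * (k + 1) = m.choose k * (m - k) := by
  rcases le_or_gt k m with h | h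
  · rw [← Nat.cast_sub h]
    exact_mod_cast congrArg (Nat.cast (R := R)) (choose_succ_right_eq m k)
  · simp [choose_eq_zero_of_lt h, choose_eq_zero_of_lt (h.trans k.lt_succ_self)]

theorem cast_choose_mul_succ_s12 [Ring R] (n k : ℕ) :
    (n.choose k : R) * (n + 1) = (n + 1).choose k * (n + 1 - k) := by
  rcases le_or_gt k (n + 1) with h | h
  · rw [← Nat.cast_succ, ← Nat.cast_sub h]
    exact_mod_cast congrArg (Nat.cast (R := R)) (choose_mul_succ_eq n k)
  · simp [choose_eq_zero_of_lt h, choose_eq_zero_of_lt (n.lt_succ_self.trans h)]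

theorem cast_choose_mul_add_two [CommRing R] (n k : ℕ) :
    (n.choose k : R) * ((n + 1) * (n + 2)) = (n + 2).choose k * ((n + 1 - k) * (n + 2 - k)) := by
  have h₁ := cast_choose_mul_succ_s12 (R := R) n k
  have h₂ := cast_choose_mul_succ_s12 (R := R) (n + 1) k
  push_cast at h₂
  linear_combination (n + 2 : R) * h₁ + (n + 1 - k : R) * h₂

theorem cast_succ_mul_centralBinom_succ_s12 [Ring R] (k : ℕ) :
    ((k : R) + 1) * centralBinom (k + 1) = 2 * (2 * k + 1) * centralBinom k := by
  exact_mod_cast congrArg (Nat.cast (R := R)) (succ_mul_centralBinom_succ k)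

end Nat

theorem ascPochhammer_eval_mul_add_two {R : Type*} [CommSemiring R] (x : R) (n : ℕ) :
    x * (x + 1) * (ascPochhammer R n).eval (x + 2) =
      (ascPochhammer R n).eval x * (x + n) * (x + n + 1) := by
  induction n with
  | zero => simp
  | succ n ih =>
    rw [ascPochhammer_succ_eval, ascPochhammer_succ_eval, ← mul_assoc, ih]
    push_cast
    ring

namespace ShiftedCentralBinomSum

def term (n i k : ℕ) : ℚ := (-1) ^ k * n.choose (k + i) * centralBinom k / 2 ^ k

def shiftedSum (n i : ℕ) : ℚ := ∑ k ∈ range (n + 1), term n i k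

theorem term_eq_zero {n i k : ℕ} (h : n < k + i) : term n i k = 0 := by
  simp [term, Nat.choose_eq_zero_of_lt h]

theorem sum_range_term {n i N : ℕ} (h : n < N + i) :
    ∑ k ∈ range N, term n i k = shiftedSum n i := by
  have hmono {a b : ℕ} (hab : a ≤ b) (ha : n < a + i) :
      ∑ k ∈ range a, term n i k = ∑ k ∈ range b, term n i k :=
    sum_subset (range_subset_range.2 hab) fun k _ hk => term_eq_zero (by simp at hk; omega)
  rcases le_total N (n + 1) with hN | hN
  · exact hmono hN h
  · exact (hmono hN (by omega)).symm

theorem shiftedSum_succ_succ (n i : ℕ) :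
    shiftedSum (n + 1) (i + 1) = shiftedSum n (i + 1) + shiftedSum n i := by
  rw [shiftedSum, sum_range_succ, term_eq_zero (by omega), add_zero, shiftedSum, shiftedSum,
    ← sum_add_distrib]
  refine sum_congr rfl fun k _ => ?_
  simp only [term, ← add_assoc, Nat.choose_succ_succ', Nat.cast_add]
  ring

theorem shiftedSum_add_two_succ (n i : ℕ) :
    shiftedSum (n + 2) (i + 1) = shiftedSum n (i + 1) + shiftedSum n i + shiftedSum (n + 1) i := by
  rw [shiftedSum_succ_succ, shiftedSum_succ_succ]

theorem term_zero_telescope (n k : ℕ) :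
    ((n : ℚ) + 2) * ((n + 2) * term (n + 2) 0 k - (n + 1) * term n 0 k) =
      (k : ℚ) ^ 2 * term (n + 2) 0 k - (k + 1 : ℚ) ^ 2 * term (n + 2) 0 (k + 1) := by
  have h₁ := cast_succ_mul_centralBinom_succ_s12 (R := ℚ) k
  have h₂ := cast_choose_succ_mul_s12 (R := ℚ) (n + 2) k
  have h₃ := cast_choose_mul_add_two (R := ℚ) n k
  simp only [term, add_zero, pow_succ]
  push_cast at h₂ ⊢
  linear_combination (-1 : ℚ) ^ k / (2 * 2 ^ k) * (-(k + 1 : ℚ) * centralBinom (k + 1) * h₂ -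
    (n + 2 - k : ℚ) * (n + 2).choose k * h₁ - 2 * (centralBinom k : ℚ) * h₃)

theorem shiftedSum_zero_add_two (n : ℕ) :
    ((n : ℚ) + 2) * shiftedSum (n + 2) 0 = (n + 1) * shiftedSum n 0 := by
  have htel :
      ((n : ℚ) + 2) * ((n + 2) * shiftedSum (n + 2) 0 - (n + 1) * shiftedSum n 0) = 0 := by
    rw [← sum_range_term (i := 0) (N := n + 3) (by omega),
      ← sum_range_term (i := 0) (N := n + 3) (by omega), mul_sum, mul_sum, ← sum_sub_distrib,
      mul_sum]
    simp_rw [term_zero_telescope]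
    have hsum := sum_range_sub' (fun k : ℕ => (k : ℚ) ^ 2 * term (n + 2) 0 k) (n + 3)
    push_cast at hsum
    rw [hsum]
    simp [term_eq_zero (show n + 2 < n + 3 + 0 by omega)]
  linear_combination (mul_eq_zero.mp htel).resolve_left (by positivity)

noncomputable def halfPochhammerRatio (ν : ℕ) : ℚ := (ascPochhammer ℚ ν).eval (1 / 2) / ν !

theorem halfPochhammerRatio_succ (ν : ℕ) :
    ((ν : ℚ) + 1) * halfPochhammerRatio (ν + 1) = (ν + 1 / 2) * halfPochhammerRatio ν := by
  simp only [halfPochhammerRatio, ascPochhammer_succ_eval, factorial_succ, Nat.cast_mul,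
    Nat.cast_succ]
  field_simp
  ring

theorem shiftedSum_two_mul_zero (ν : ℕ) : shiftedSum (2 * ν) 0 = halfPochhammerRatio ν := by
  induction ν with
  | zero => simp [shiftedSum, term, halfPochhammerRatio]
  | succ m ih =>
    have hrec := shiftedSum_zero_add_two (2 * m)
    have hr := halfPochhammerRatio_succ m
    refine mul_left_cancel₀ (show (2 * (m : ℚ) + 2) ≠ 0 by positivity) ?_
    push_cast at hrec
    linear_combination hrec + (2 * m + 1 : ℚ) * ih - 2 * hr

theorem shiftedSum_two_mul_add_one_zero (ν : ℕ) : shiftedSum (2 * ν + 1) 0 = 0 := by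
  induction ν with
  | zero => simp [shiftedSum, term, sum_range_succ, centralBinom]
  | succ m ih =>
    have hrec := shiftedSum_zero_add_two (2 * m + 1)
    rw [ih, mul_zero] at hrec
    exact (mul_eq_zero.mp hrec).resolve_left (by positivity)

theorem shiftedSum_two_mul_add_one_one (ν : ℕ) :
    shiftedSum (2 * ν + 1) 1 = (2 * ν + 1) * halfPochhammerRatio ν := by
  induction ν with
  | zero => simp [shiftedSum, term, sum_range_succ, halfPochhammerRatio]
  | succ m ih =>
    rw [show 2 * (m + 1) + 1 = 2 * m + 1 + 2 by ring, shiftedSum_add_two_succ,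
      shiftedSum_two_mul_add_one_zero, show 2 * m + 1 + 1 = 2 * (m + 1) by ring,
      shiftedSum_two_mul_zero, ih]
    push_cast
    linear_combination -2 * halfPochhammerRatio_succ m

theorem shiftedSum_two_mul_add_two_one (ν : ℕ) :
    shiftedSum (2 * ν + 2) 1 = (2 * ν + 1) * halfPochhammerRatio ν := by
  rw [shiftedSum_succ_succ, shiftedSum_two_mul_add_one_zero, add_zero,
    shiftedSum_two_mul_add_one_one]

theorem shiftedSum_two_mul_add_two_two (ν : ℕ) :
    3 * shiftedSum (2 * ν + 2) 2 = (4 * ν + 3) * (2 * ν + 1) * halfPochhammerRatio ν := by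
  induction ν with
  | zero =>
    norm_num [shiftedSum, term, sum_range_succ, halfPochhammerRatio, centralBinom, Nat.choose]
  | succ m ih =>
    rw [show 2 * (m + 1) + 2 = 2 * m + 2 + 2 by ring, shiftedSum_add_two_succ,
      shiftedSum_two_mul_add_two_one, show 2 * m + 2 + 1 = 2 * (m + 1) + 1 by ring,
      shiftedSum_two_mul_add_one_one]
    push_cast
    linear_combination ih - (8 * m + 12 : ℚ) * halfPochhammerRatio_succ m

theorem shiftedSum_two_mul_add_three_two (ν : ℕ) :
    3 * shiftedSum (2 * ν + 3) 2 = 2 * (2 * ν + 3) * (2 * ν + 1) * halfPochhammerRatio ν := by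
  rw [shiftedSum_succ_succ, mul_add, shiftedSum_two_mul_add_two_two,
    shiftedSum_two_mul_add_two_one]
  ring

theorem shiftedSum_two_mul_add_three_three (ν : ℕ) :
    15 * shiftedSum (2 * ν + 3) 3 =
      (8 * ν + 5) * (2 * ν + 1) * (2 * ν + 3) * halfPochhammerRatio ν := by
  induction ν with
  | zero =>
    norm_num [shiftedSum, term, sum_range_succ, halfPochhammerRatio, centralBinom, Nat.choose]
  | succ m ih =>
    have hodd := shiftedSum_two_mul_add_three_two m
    have heven := shiftedSum_two_mul_add_two_two (m + 1)
    rw [show 2 * (m + 1) + 3 = 2 * m + 3 + 2 by ring, shiftedSum_add_two_succ,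
      show 2 * m + 3 + 1 = 2 * (m + 1) + 2 by ring]
    push_cast at heven ⊢
    linear_combination ih + 5 * hodd + 5 * heven -
      (32 * m ^ 2 + 108 * m + 90 : ℚ) * halfPochhammerRatio_succ m

theorem three_mul_ascPochhammer_eval_five_halves_div (ν : ℕ) :
    3 * ((ascPochhammer ℚ ν).eval (5 / 2) / ν !) =
      (2 * ν + 1) * (2 * ν + 3) * halfPochhammerRatio ν := by
  have hshift := ascPochhammer_eval_mul_add_two (1 / 2 : ℚ) ν
  norm_num at hshift
  rw [halfPochhammerRatio, mul_div_assoc', mul_div_assoc']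
  congr 1
  linear_combination 4 * hshift

end ShiftedCentralBinomSum

open ShiftedCentralBinomSum

/-- Identity (3.7): the even case of Theorem 2.1 with `i = 3`. -/
theorem theorem_2_1_even_i_three (ν : ℕ) :
    ∑ k ∈ Finset.range (2 * ν + 1),
      (-1 : ℚ) ^ k * ((2 * ν + 3).choose (k + 3)) * ((2 * k).choose k) / 2 ^ k
      = (1 / 5) * (8 * ν + 5) * (ascPochhammer ℚ ν).eval (5 / 2)
          / (ascPochhammer ℚ ν).eval 1 := by
  have hsum : ∑ k ∈ Finset.range (2 * ν + 1),
      (-1 : ℚ) ^ k * ((2 * ν + 3).choose (k + 3)) * ((2 * k).choose k) / 2 ^ k =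
        shiftedSum (2 * ν + 3) 3 :=
    sum_range_term (by omega)
  rw [hsum, ascPochhammer_eval_one, mul_div_assoc]
  linear_combination shiftedSum_two_mul_add_three_three ν / 15 -
    (8 * ν + 5 : ℚ) / 15 * three_mul_ascPochhammer_eval_five_halves_div ν
end
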